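/- Let p be a source on n ≥ 2 symbols with p(1) ≤ 2·p(n−1). Then there exists a codeword-length vector l ∈ ℒ_n attaining R*(l,p) = R*_opt(p) such that every entry l(i) lies in {⌊lg n⌋, ⌈lg n⌉} and ∑_{i=1}^n 2^{−l(i)} = 1 (i.e., the optimum is attained by a complete tree). -/

import Mathlib

/-- A source: a positive, monotonically nonincreasing probability mass function on `Fin n`. -/
def IsSource (n : ℕ) (p : Fin n → ℝ) : Prop :=
  (∀ i, 0 < p i) ∧ (∑ i, p i = 1) ∧ (∀ i j : Fin n, i ≤ j → p j ≤ p i)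

/-- A codeword-length vector: positive integer lengths satisfying the Kraft inequality. -/
def IsCLV (n : ℕ) (l : Fin n → ℤ) : Prop :=
  (∀ i, 1 ≤ l i) ∧ (∑ i, (2:ℝ) ^ (-(l i)) ≤ 1)

/-- Maximum pointwise redundancy `R*(l,p) = max_i (l(i) + lg p(i))`. -/
noncomputable def Rstar (n : ℕ) (l : Fin n → ℤ) (p : Fin n → ℝ) : ℝ :=
  ⨆ i : Fin n, ((l i : ℝ) + Real.logb 2 (p i))

/-- Minimum maximum pointwise redundancy over all codeword-length vectors. -/
noncomputable def RstarOpt (n : ℕ) (p : Fin n → ℝ) : ℝ :=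
  sInf {r : ℝ | ∃ l : Fin n → ℤ, IsCLV n l ∧ Rstar n l p = r}

/-!
Take `l i = ⌊lg (n + i)⌋` (indices from `0`). These lengths are `⌊lg n⌋` or `⌈lg n⌉`, and
their Kraft sum `∑_{n ≤ m < 2n} 2^(-⌊lg m⌋)` equals `1` because it does not change from `n` to
`n + 1`: the new terms at `2n` and `2n + 1` together weigh as much as the dropped term at `n`.

For optimality, suppose `l'` satisfies Kraft and `l' i + lg p i < l i₀ + lg p i₀` for all `i`.
Monotonicity of `p` gives `l' i < l i₀` for `i ≤ i₀`, and `p 0 ≤ 2 p (n - 2)` gives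
`l' i ≤ l i₀` for `i < n - 1`; hence `∑ 2^(-l' i) > (n + i₀) 2^(-l i₀) ≥ 1`, since
`2^(l i₀) ≤ n + i₀` by the choice of `l`.
-/

lemma card_add_card_sub_one_mul_lt_sum_zpow {ι : Type*} [Fintype ι] [DecidableEq ι]
    (l : ι → ℤ) (c : ℤ) (s : Finset ι) (j : ι)
    (h_mem : ∀ i ∈ s, l i < c) (h_ne : ∀ i ≠ j, l i ≤ c) :
    (s.card + (Fintype.card ι - 1 : ℝ)) * 2 ^ (-c) < ∑ i, (2:ℝ) ^ (-l i) := by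
  set X : ℝ := 2 ^ (-c)
  have h_double : ∀ i ∈ s, 2 * X ≤ 2 ^ (-l i) := fun i hi => by
    rw [mul_comm, ← zpow_add_one₀ two_ne_zero]
    exact zpow_le_zpow_right₀ one_le_two (by linarith [h_mem i hi])
  have h_single : ∀ i ≠ j, X ≤ 2 ^ (-l i) := fun i hi =>
    zpow_le_zpow_right₀ one_le_two (by linarith [h_ne i hi])
  set f : ι → ℝ := fun i => (if i ∈ s then X else 0) + (if i ≠ j then X else 0)
  have h_lt : f j < 2 ^ (-l j) := by
    have : 0 < (2:ℝ) ^ (-l j) := by positivity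
    by_cases hs : j ∈ s <;> simp only [f, hs, ne_eq, not_true_eq_false, if_true, if_false]
    · linarith [h_double j hs]
    · linarith
  have h_le : ∀ i, f i ≤ 2 ^ (-l i) := by
    intro i
    rcases eq_or_ne i j with rfl | hj
    · exact h_lt.le
    by_cases hs : i ∈ s <;> simp only [f, hs, hj, ne_eq, not_false_eq_true, if_true, if_false]
    · linarith [h_double i hs]
    · linarith [h_single i hj]
  calc (s.card + (Fintype.card ι - 1 : ℝ)) * X = ∑ i, f i := by
        rw [Finset.sum_add_distrib, ← Finset.sum_filter, ← Finset.sum_filter, Finset.sum_const,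
          Finset.sum_const, Finset.filter_univ_mem, Finset.filter_ne',
          Finset.card_erase_of_mem (Finset.mem_univ _), Finset.card_univ, nsmul_eq_mul,
          nsmul_eq_mul, Nat.cast_sub (Fintype.card_pos_iff.mpr ⟨j⟩)]
        push_cast
        ring
    _ < ∑ i, (2:ℝ) ^ (-l i) :=
        Finset.sum_lt_sum (fun i _ => h_le i) ⟨j, Finset.mem_univ _, h_lt⟩

lemma sum_range_two_zpow_neg_log_add {n : ℕ} (hn : 1 ≤ n) :
    ∑ i ∈ Finset.range n, (2:ℝ) ^ (-(Nat.log 2 (n + i) : ℤ)) = 1 := by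
  set g : ℕ → ℝ := fun j => 2 ^ (-(Nat.log 2 j : ℤ))
  have h_log_double : ∀ m ≠ 0, Nat.log 2 (2 * m) = Nat.log 2 m + 1 := fun m hm => by
    rw [mul_comm, Nat.log_mul_base one_lt_two hm]
  have h_log_double_add_one : ∀ m ≠ 0, Nat.log 2 (2 * m + 1) = Nat.log 2 m + 1 := fun m hm => by
    rw [Nat.log_of_one_lt_of_le one_lt_two (by omega)]
    congr 2
    omega
  have h_halve : ∀ m ≠ 0, g (2 * m) + g (2 * m + 1) = g m := fun m hm => by
    simp only [g, h_log_double m hm, h_log_double_add_one m hm]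
    push_cast
    rw [neg_add, zpow_add₀ two_ne_zero]
    ring
  change ∑ i ∈ Finset.range n, g (n + i) = 1
  induction n, hn using Nat.le_induction with
  | base => simp [g]
  | succ n hn ih =>
    have h_shift := Finset.sum_range_succ' (fun i => g (n + i)) n
    rw [Finset.sum_range_succ, ih] at h_shift
    have h_reindex : ∑ i ∈ Finset.range n, g (n + 1 + i) = ∑ i ∈ Finset.range n, g (n + (i + 1)) :=
      Finset.sum_congr rfl fun i _ => by rw [add_right_comm, add_assoc]
    rw [Finset.sum_range_succ, h_reindex, show n + 1 + n = 2 * n + 1 by ring]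
    rw [show n + n = 2 * n by ring, add_zero] at h_shift
    linarith [h_halve n (by omega)]

lemma log_two_add_eq_log_or_clog {n i : ℕ} (hi : i < n) :
    Nat.log 2 (n + i) = Nat.log 2 n ∨ Nat.log 2 (n + i) = Nat.clog 2 n := by
  have h_ge : Nat.log 2 n ≤ Nat.log 2 (n + i) := Nat.log_mono_right (by omega)
  have h_le : Nat.log 2 (n + i) < Nat.clog 2 n + 1 := by
    refine Nat.log_lt_of_lt_pow (by omega) ?_
    have := Nat.le_pow_clog one_lt_two n
    rw [pow_succ]
    omega
  have h_clog : Nat.clog 2 n ≤ Nat.log 2 n + 1 :=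
    Nat.clog_le_of_le_pow (Nat.lt_pow_succ_log_self one_lt_two n).le
  omega

lemma Rstar_le_Rstar_of_forall_exists {n : ℕ} {l l' : Fin n → ℤ} {p : Fin n → ℝ}
    (h : ∀ i, ∃ j, (l i : ℝ) + Real.logb 2 (p i) ≤ l' j + Real.logb 2 (p j)) :
    Rstar n l p ≤ Rstar n l' p := by
  rcases isEmpty_or_nonempty (Fin n) with hn | hn
  · simp [Rstar]
  refine ciSup_le fun i => ?_
  obtain ⟨j, hj⟩ := h i
  exact le_ciSup_of_le (Finite.bddAbove_range _) j hj

lemma RstarOpt_eq_Rstar {n : ℕ} {l : Fin n → ℤ} {p : Fin n → ℝ} (hl : IsCLV n l)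
    (h : ∀ l', IsCLV n l' → Rstar n l p ≤ Rstar n l' p) : RstarOpt n p = Rstar n l p :=
  IsLeast.csInf_eq ⟨⟨l, hl, rfl⟩, by rintro _ ⟨l', hl', rfl⟩; exact h l' hl'⟩

theorem Rstar_le_Rstar_of_two_zpow_le {n : ℕ} {p : Fin n → ℝ} (hpos : ∀ i, 0 < p i)
    (hanti : Antitone p) {j : Fin n} (hratio : ∀ i, ∀ k ≠ j, p i ≤ 2 * p k)
    {l : Fin n → ℤ} (hl : ∀ i : Fin n, (2:ℝ) ^ l i ≤ n + i)
    {l' : Fin n → ℤ} (hl' : ∑ i, (2:ℝ) ^ (-l' i) ≤ 1) : Rstar n l p ≤ Rstar n l' p := by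
  refine Rstar_le_Rstar_of_forall_exists fun i₀ => ?_
  by_contra! h
  have h_mem : ∀ i ∈ Finset.Iic i₀, l' i < l i₀ := by
    intro i hi
    have := Real.logb_le_logb_of_le one_lt_two (hpos i₀) (hanti (Finset.mem_Iic.mp hi))
    have := h i
    exact_mod_cast (by linarith : (l' i : ℝ) < l i₀)
  have h_ne : ∀ i ≠ j, l' i ≤ l i₀ := by
    intro i hi
    have := Real.logb_le_logb_of_le one_lt_two (hpos i₀) (hratio i₀ i hi)
    rw [Real.logb_mul two_ne_zero (hpos i).ne', Real.logb_self_eq_one one_lt_two] at this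
    have := h i
    exact Int.lt_add_one_iff.mp (by exact_mod_cast (by linarith : (l' i : ℝ) < l i₀ + 1))
  have h_lt := card_add_card_sub_one_mul_lt_sum_zpow l' (l i₀) _ j h_mem h_ne
  rw [Fin.card_Iic, Fintype.card_fin] at h_lt
  have h_one : 1 ≤ ((n:ℝ) + i₀) * 2 ^ (-l i₀) := by
    rw [zpow_neg, ← div_eq_mul_inv, le_div_iff₀ (by positivity), one_mul]
    exact hl i₀
  push_cast at h_lt
  linarith

theorem stmt12 (n : ℕ) (hn : 2 ≤ n) (p : Fin n → ℝ) (hp : IsSource n p)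
    (hcond : p ⟨0, by omega⟩ ≤ 2 * p ⟨n - 2, by omega⟩) :
    ∃ l : Fin n → ℤ, IsCLV n l ∧ Rstar n l p = RstarOpt n p ∧
      (∀ i, l i = Nat.log 2 n ∨ l i = Nat.clog 2 n) ∧
      ∑ i, (2:ℝ) ^ (-(l i)) = 1 := by
  obtain ⟨hpos, -, hanti⟩ := hp
  replace hanti : Antitone p := hanti
  set l : Fin n → ℤ := fun i => Nat.log 2 (n + i)
  have hkraft : ∑ i, (2:ℝ) ^ (-l i) = 1 := by
    rw [← sum_range_two_zpow_neg_log_add (by omega : 1 ≤ n)]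
    exact Fin.sum_univ_eq_sum_range (fun i => (2:ℝ) ^ (-(Nat.log 2 (n + i) : ℤ))) n
  have hclv : IsCLV n l :=
    ⟨fun i => Nat.one_le_cast.mpr (Nat.log_pos one_lt_two (by omega)), hkraft.le⟩
  have hl : ∀ i : Fin n, (2:ℝ) ^ l i ≤ n + i := fun i => by
    rw [zpow_natCast]
    exact_mod_cast Nat.pow_log_le_self 2 (by omega)
  have hratio : ∀ i, ∀ k ≠ (⟨n - 1, by omega⟩ : Fin n), p i ≤ 2 * p k := by
    intro i k hk
    have hk_le : (k : ℕ) ≤ n - 2 := by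
      have : (k : ℕ) ≠ n - 1 := fun h => hk (Fin.ext h)
      omega
    calc p i ≤ p ⟨0, by omega⟩ := hanti (show ⟨0, _⟩ ≤ i from Nat.zero_le _)
      _ ≤ 2 * p ⟨n - 2, by omega⟩ := hcond
      _ ≤ 2 * p k := by gcongr; exact hanti (show k ≤ ⟨n - 2, _⟩ from hk_le)
  refine ⟨l, hclv, (RstarOpt_eq_Rstar hclv fun l' hl' => ?_).symm,
    fun i => by simpa only [l, Nat.cast_inj] using log_two_add_eq_log_or_clog i.isLt, hkraft⟩
  exact Rstar_le_Rstar_of_two_zpow_le hpos hanti hratio hl hl'.2
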